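/- The quantities S_n satisfy the full-history recurrence S_n = 2·S_{n−1} + S_{n−2} + S_{n−3} + … + S_2 + S_1 + 2 for all n ≥ 3, i.e., S_n = 2·S_{n−1} + (Σ_{k=1}^{n−2} S_k) + 2. -/

import Mathlib

/-- `S n` is the number of strings (lists) of length `n` over the alphabet `{0,1,2}`
(modeled as `Fin 3`) in which the pair `12` does not occur consecutively. -/
noncomputable def S (n : ℕ) : ℕ :=
  Nat.card {l : List (Fin 3) // l.length = n ∧ ¬ [1, 2] <:+: l}

/-!
Call a string admissible if `12` does not occur in it. An admissible string of length `n + 1`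
starting with `2` is `2` followed by any admissible string; one not starting with `2` is `0`
followed by any admissible string, or `1` followed by an admissible string not starting with `2`.
So if `T n` counts the admissible strings of length `n` not starting with `2`, then
`S (n + 1) = S n + T (n + 1)` and `T (n + 1) = S n + T n`. Hence `T n = 1 + ∑_{k < n} S k`, and
substituting this into the first identity gives the recurrence.
-/

open Set

theorem List.pair_infix_cons_iff {α : Type*} {a b c : α} {l : List α} :
    [a, b] <:+: c :: l ↔ (c = a ∧ l.head? = some b) ∨ [a, b] <:+: l := by
  rw [List.infix_cons_iff, List.cons_prefix_cons, List.singleton_prefix_iff_head?_eq_some, eq_comm]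

theorem ncard_image_cons_union_image_cons {α : Type*} {a b : α} (hab : a ≠ b)
    {s t : Set (List α)} (hs : s.Finite) (ht : t.Finite) :
    (List.cons a '' s ∪ List.cons b '' t).ncard = s.ncard + t.ncard := by
  have hdisj : Disjoint (List.cons a '' s) (List.cons b '' t) := by
    rw [disjoint_left]
    rintro _ ⟨x, -, rfl⟩ ⟨y, -, hyx⟩
    exact hab (List.cons.inj hyx).1.symm
  rw [ncard_union_eq hdisj (hs.image _) (ht.image _),
    ncard_image_of_injective _ List.cons_injective, ncard_image_of_injective _ List.cons_injective]

def admissible (n : ℕ) : Set (List (Fin 3)) := {l | l.length = n ∧ ¬ [1, 2] <:+: l}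

def admissibleNotStartingWithTwo (n : ℕ) : Set (List (Fin 3)) :=
  {l | l ∈ admissible n ∧ l.head? ≠ some 2}

theorem S_eq_ncard_admissible (n : ℕ) : S n = (admissible n).ncard := rfl

theorem admissible_finite (n : ℕ) : (admissible n).Finite :=
  (List.finite_length_eq (Fin 3) n).subset fun _ hl => hl.1

theorem admissibleNotStartingWithTwo_finite (n : ℕ) : (admissibleNotStartingWithTwo n).Finite :=
  (admissible_finite n).subset fun _ hl => hl.1

theorem admissible_succ (n : ℕ) :
    admissible (n + 1) = List.cons 2 '' admissible n ∪ admissibleNotStartingWithTwo (n + 1) := by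
  ext (_ | ⟨c, l⟩)
  · simp [admissible, admissibleNotStartingWithTwo]
  · simp only [admissible, admissibleNotStartingWithTwo, mem_union, mem_image, mem_ofPred_eq,
      List.length_cons, List.pair_infix_cons_iff, List.cons.injEq, List.head?_cons]
    fin_cases c <;> simp

theorem admissibleNotStartingWithTwo_succ (n : ℕ) :
    admissibleNotStartingWithTwo (n + 1) =
      List.cons 0 '' admissible n ∪ List.cons 1 '' admissibleNotStartingWithTwo n := by
  ext (_ | ⟨c, l⟩)
  · simp [admissible, admissibleNotStartingWithTwo]
  · simp only [admissible, admissibleNotStartingWithTwo, mem_union, mem_image, mem_ofPred_eq,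
      List.length_cons, List.pair_infix_cons_iff, List.cons.injEq, List.head?_cons]
    fin_cases c <;> simp
    tauto

theorem admissible_zero : admissible 0 = {[]} := by
  ext l
  cases l <;> simp [admissible]

theorem admissibleNotStartingWithTwo_zero : admissibleNotStartingWithTwo 0 = {[]} := by
  ext l
  cases l <;> simp [admissibleNotStartingWithTwo, admissible_zero]

theorem S_zero : S 0 = 1 := by
  rw [S_eq_ncard_admissible, admissible_zero, ncard_singleton]

theorem S_succ (n : ℕ) : S (n + 1) = S n + (admissibleNotStartingWithTwo (n + 1)).ncard := by
  have hdisj : Disjoint (List.cons 2 '' admissible n) (admissibleNotStartingWithTwo (n + 1)) := by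
    rw [disjoint_left]
    rintro _ ⟨l, -, rfl⟩ hl
    exact hl.2 rfl
  rw [S_eq_ncard_admissible, admissible_succ,
    ncard_union_eq hdisj ((admissible_finite n).image _) (admissibleNotStartingWithTwo_finite _),
    ncard_image_of_injective _ List.cons_injective, S_eq_ncard_admissible]

theorem ncard_admissibleNotStartingWithTwo (n : ℕ) :
    (admissibleNotStartingWithTwo n).ncard = 1 + ∑ k ∈ Finset.range n, S k := by
  induction n with
  | zero =>
    rw [admissibleNotStartingWithTwo_zero, ncard_singleton, Finset.sum_range_zero, add_zero]
  | succ n ih =>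
    rw [admissibleNotStartingWithTwo_succ, ncard_image_cons_union_image_cons (by decide)
      (admissible_finite n) (admissibleNotStartingWithTwo_finite n), ih, Finset.sum_range_succ,
      S_eq_ncard_admissible]
    ring

theorem S_full_history_recurrence (n : ℕ) (hn : 3 ≤ n) :
    S n = 2 * S (n - 1) + (∑ k ∈ Finset.Icc 1 (n - 2), S k) + 2 := by
  obtain ⟨m, rfl⟩ : ∃ m, n = m + 2 := ⟨n - 2, by omega⟩
  have hsum : ∑ k ∈ Finset.range (m + 1), S k = S 0 + ∑ k ∈ Finset.Icc 1 m, S k := by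
    rw [Finset.range_eq_Ico, Finset.sum_eq_sum_Ico_succ_bot (Nat.succ_pos m)]
    rfl
  rw [show m + 2 - 1 = m + 1 by omega, show m + 2 - 2 = m by omega, S_succ (m + 1),
    ncard_admissibleNotStartingWithTwo, Finset.sum_range_succ, hsum, S_zero]
  ring
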